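/- Let X be a normed vector space over ℝ, let Y be a real Hilbert space, let A : X → Y be a bounded linear operator, and let N ≥ 1 and τ > 0. Suppose (i) there exists an N-dimensional subspace S ⊆ Y with sup_{‖f‖ ≤ 1} dist(A f, S) ≤ τ (so that the Kolmogorov N-width of A is at most τ and is attained within τ), and (ii) τ < d_{N-1}(A), the Kolmogorov (N−1)-width of A. Then the numerical τ-rank of A equals N: there exists a bounded linear operator Ã with ‖A − Ã‖ ≤ τ whose range has dimension N, and every bounded linear operator Ã with ‖A − Ã‖ ≤ τ has range of dimension at least N. -/

import Mathlib

/-!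
Lower bound: if `‖A - Ã‖ < d_{N-1}(A)`, the range of `Ã` cannot have dimension `< N`, since any
`(N-1)`-dimensional subspace containing it is within `‖A - Ã‖` of every `A f`, `‖f‖ ≤ 1`.
Upper bound: composing `A` with the orthogonal projection onto the subspace `S` of (i) moves each
`A f` by exactly `dist(A f, S)`, so it is within `τ` of `A` and has range inside `S`; the lower
bound then forces its range to have dimension exactly `N`.
-/

/-- The Kolmogorov `N`-width of a bounded linear operator `A : X → Y`:
the infimum over `N`-dimensional subspaces `S ⊆ Y` of `sup_{‖f‖ ≤ 1} dist(A f, S)`. -/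
noncomputable def kolWidth {X Y : Type*} [NormedAddCommGroup X] [NormedSpace ℝ X]
    [NormedAddCommGroup Y] [NormedSpace ℝ Y] (A : X →L[ℝ] Y) (N : ℕ) : ℝ :=
  sInf { r : ℝ | ∃ S : Submodule ℝ Y, FiniteDimensional ℝ S ∧ Module.finrank ℝ S = N ∧
    r = ⨆ f : {f : X // ‖f‖ ≤ 1}, Metric.infDist (A f.1) (S : Set Y) }

open Metric Module

namespace Submodule

variable {K V : Type*} [DivisionRing K] [AddCommGroup V] [Module K V]

theorem finrank_sup_span_singleton_of_notMem (p : Submodule K V) [FiniteDimensional K p]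
    {v : V} (hv : v ∉ p) : finrank K ↥(p ⊔ K ∙ v) = finrank K p + 1 := by
  have hv₀ : v ≠ 0 := fun h ↦ hv (h ▸ p.zero_mem)
  have hdisj : p ⊓ K ∙ v = ⊥ := ((disjoint_span_singleton' hv₀).mpr hv).eq_bot
  have := finrank_sup_add_finrank_inf_eq p (K ∙ v)
  rwa [hdisj, finrank_bot, add_zero, finrank_span_singleton hv₀] at this

theorem exists_le_finrank_eq (p : Submodule K V) [FiniteDimensional K p] {k : ℕ}
    (hpk : finrank K p ≤ k) (hk : (k : Cardinal) ≤ Module.rank K V) :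
    ∃ q : Submodule K V, p ≤ q ∧ FiniteDimensional K q ∧ finrank K q = k := by
  induction k with
  | zero => exact ⟨p, le_rfl, inferInstance, Nat.le_zero.mp hpk⟩
  | succ k ih =>
    rcases hpk.eq_or_lt with hpk | hpk
    · exact ⟨p, le_rfl, inferInstance, hpk⟩
    obtain ⟨q, hpq, hq, rfl⟩ :=
      ih (Nat.lt_succ_iff.mp hpk) (le_trans (by exact_mod_cast k.le_succ) hk)
    have hrank : Module.rank K q < Module.rank K V := by
      rw [← finrank_eq_rank]
      exact lt_of_lt_of_le (by exact_mod_cast (finrank K q).lt_succ_self) hk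
    obtain ⟨v, hv⟩ := exists_smul_notMem_of_rank_lt hrank
    have hvq : v ∉ q := by simpa using hv 1 one_ne_zero
    exact ⟨q ⊔ K ∙ v, hpq.trans le_sup_left, inferInstance,
      finrank_sup_span_singleton_of_notMem q hvq⟩

end Submodule

section KolmogorovWidth

variable {X Y : Type*} [NormedAddCommGroup X] [NormedSpace ℝ X]

noncomputable def kolDeviation [NormedAddCommGroup Y] [NormedSpace ℝ Y]
    (A : X →L[ℝ] Y) (S : Submodule ℝ Y) : ℝ :=
  ⨆ f : {f : X // ‖f‖ ≤ 1}, infDist (A f.1) (S : Set Y)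

section Normed

variable [NormedAddCommGroup Y] [NormedSpace ℝ Y] (A : X →L[ℝ] Y)

theorem kolDeviation_nonneg (S : Submodule ℝ Y) : 0 ≤ kolDeviation A S :=
  Real.iSup_nonneg fun _ ↦ infDist_nonneg

theorem infDist_le_kolDeviation (S : Submodule ℝ Y) {f : X} (hf : ‖f‖ ≤ 1) :
    infDist (A f) (S : Set Y) ≤ kolDeviation A S := by
  refine le_ciSup (f := fun f : {f : X // ‖f‖ ≤ 1} ↦ infDist (A f.1) (S : Set Y))
    ⟨‖A‖, ?_⟩ ⟨f, hf⟩
  rintro _ ⟨g, rfl⟩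
  calc infDist (A g.1) (S : Set Y) ≤ dist (A g.1) 0 := infDist_le_dist_of_mem S.zero_mem
    _ = ‖A g.1‖ := dist_zero_right _
    _ ≤ ‖A‖ := A.unit_le_opNorm g.1 g.2

theorem kolDeviation_le_opNorm_sub {S : Submodule ℝ Y} {B : X →L[ℝ] Y}
    (hB : LinearMap.range (B : X →ₗ[ℝ] Y) ≤ S) : kolDeviation A S ≤ ‖A - B‖ := by
  have : Nonempty {f : X // ‖f‖ ≤ 1} := ⟨⟨0, by simp⟩⟩
  refine ciSup_le fun f ↦ ?_
  calc infDist (A f.1) (S : Set Y) ≤ dist (A f.1) (B f.1) :=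
        infDist_le_dist_of_mem (hB ⟨f.1, rfl⟩)
    _ = ‖(A - B) f.1‖ := by rw [dist_eq_norm]; rfl
    _ ≤ ‖A - B‖ := (A - B).unit_le_opNorm f.1 f.2

theorem kolWidth_le_kolDeviation (S : Submodule ℝ Y) [FiniteDimensional ℝ S] :
    kolWidth A (finrank ℝ S) ≤ kolDeviation A S := by
  refine csInf_le ⟨0, ?_⟩ ⟨S, inferInstance, rfl, rfl⟩
  rintro _ ⟨T, -, -, rfl⟩
  exact kolDeviation_nonneg A T

theorem kolWidth_le_opNorm_sub {k : ℕ} (hk : (k : Cardinal) ≤ Module.rank ℝ Y) (B : X →L[ℝ] Y)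
    [FiniteDimensional ℝ (LinearMap.range (B : X →ₗ[ℝ] Y))]
    (hB : finrank ℝ (LinearMap.range (B : X →ₗ[ℝ] Y)) ≤ k) : kolWidth A k ≤ ‖A - B‖ := by
  obtain ⟨S, hBS, hS, rfl⟩ := Submodule.exists_le_finrank_eq _ hB hk
  exact (kolWidth_le_kolDeviation A S).trans (kolDeviation_le_opNorm_sub A hBS)

theorem natCast_le_rank_range_of_opNorm_sub_lt {N : ℕ} (hN : (N : Cardinal) ≤ Module.rank ℝ Y)
    {B : X →L[ℝ] Y} (hB : ‖A - B‖ < kolWidth A (N - 1)) :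
    (N : Cardinal) ≤ Module.rank ℝ (LinearMap.range (B : X →ₗ[ℝ] Y)) := by
  by_contra! hlt
  have : FiniteDimensional ℝ (LinearMap.range (B : X →ₗ[ℝ] Y)) :=
    Module.rank_lt_aleph0_iff.mp (hlt.trans Cardinal.natCast_lt_aleph0)
  rw [← finrank_eq_rank, Nat.cast_lt] at hlt
  have hk : ((N - 1 : ℕ) : Cardinal) ≤ Module.rank ℝ Y :=
    le_trans (by exact_mod_cast N.sub_le 1) hN
  exact hB.not_ge (kolWidth_le_opNorm_sub A hk B (by omega))

end Normed

theorem opNorm_sub_starProjection_comp_le [NormedAddCommGroup Y] [InnerProductSpace ℝ Y]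
    (A : X →L[ℝ] Y) (S : Submodule ℝ Y) [S.HasOrthogonalProjection] :
    ‖A - S.starProjection ∘L A‖ ≤ kolDeviation A S := by
  refine ContinuousLinearMap.opNorm_le_of_unit_norm (kolDeviation_nonneg A S) fun f hf ↦ ?_
  have hproj : ‖A f - S.starProjection (A f)‖ = infDist (A f) (S : Set Y) := by
    simp only [Submodule.starProjection_minimal, infDist_eq_iInf, dist_eq_norm]
    rfl
  simpa [hproj] using infDist_le_kolDeviation A S hf.le

end KolmogorovWidth

theorem numericalRank_eq_of_kolWidth_general
    {X Y : Type*} [NormedAddCommGroup X] [NormedSpace ℝ X]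
    [NormedAddCommGroup Y] [InnerProductSpace ℝ Y]
    (A : X →L[ℝ] Y) (N : ℕ) (τ : ℝ)
    (hi : ∃ S : Submodule ℝ Y, FiniteDimensional ℝ S ∧ Module.finrank ℝ S = N ∧
      (⨆ f : {f : X // ‖f‖ ≤ 1}, Metric.infDist (A f.1) (S : Set Y)) ≤ τ)
    (hii : τ < kolWidth A (N - 1)) :
    (∃ Atil : X →L[ℝ] Y, ‖A - Atil‖ ≤ τ ∧
        FiniteDimensional ℝ (LinearMap.range (Atil : X →ₗ[ℝ] Y)) ∧
        Module.finrank ℝ (LinearMap.range (Atil : X →ₗ[ℝ] Y)) = N) ∧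
      (∀ Atil : X →L[ℝ] Y, ‖A - Atil‖ ≤ τ →
        (N : Cardinal) ≤ Module.rank ℝ (LinearMap.range (Atil : X →ₗ[ℝ] Y))) := by
  obtain ⟨S, hS, rfl, hSτ⟩ := hi
  have lower : ∀ B : X →L[ℝ] Y, ‖A - B‖ ≤ τ →
      (finrank ℝ S : Cardinal) ≤ Module.rank ℝ (LinearMap.range (B : X →ₗ[ℝ] Y)) :=
    fun B hB ↦ natCast_le_rank_range_of_opNorm_sub_lt A
      ((finrank_eq_rank ℝ S).trans_le S.rank_le) (hB.trans_lt hii)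
  refine ⟨?_, lower⟩
  set B := S.starProjection ∘L A
  have hBS : LinearMap.range (B : X →ₗ[ℝ] Y) ≤ S := by
    rintro _ ⟨f, rfl⟩
    exact S.starProjection_apply_mem (A f)
  have hB : ‖A - B‖ ≤ τ := (opNorm_sub_starProjection_comp_le A S).trans hSτ
  have hfin := Submodule.finiteDimensional_of_le hBS
  refine ⟨B, hB, hfin, (Submodule.finrank_mono hBS).antisymm ?_⟩
  have hrank := lower B hB
  rw [← finrank_eq_rank] at hrank
  exact_mod_cast hrank

/-- Proposition 3.3 of the paper: if (i) some `N`-dimensional subspace `S ⊆ Y`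
satisfies `sup_{‖f‖ ≤ 1} dist(A f, S) ≤ τ`, and (ii) `τ < d_{N-1}(A)`, then the numerical
`τ`-rank of `A` equals `N`: there is `Ã` with `‖A − Ã‖ ≤ τ` whose range has dimension `N`,
and every `Ã` with `‖A − Ã‖ ≤ τ` has range of dimension at least `N`. -/
theorem numericalRank_eq_of_kolWidth
    {X Y : Type*} [NormedAddCommGroup X] [NormedSpace ℝ X]
    [NormedAddCommGroup Y] [InnerProductSpace ℝ Y] [CompleteSpace Y]
    (A : X →L[ℝ] Y) (N : ℕ) (hN : 1 ≤ N) (τ : ℝ) (hτ : 0 < τ)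
    (hi : ∃ S : Submodule ℝ Y, FiniteDimensional ℝ S ∧ Module.finrank ℝ S = N ∧
      (⨆ f : {f : X // ‖f‖ ≤ 1}, Metric.infDist (A f.1) (S : Set Y)) ≤ τ)
    (hii : τ < kolWidth A (N - 1)) :
    (∃ Atil : X →L[ℝ] Y, ‖A - Atil‖ ≤ τ ∧
        FiniteDimensional ℝ (LinearMap.range (Atil : X →ₗ[ℝ] Y)) ∧
        Module.finrank ℝ (LinearMap.range (Atil : X →ₗ[ℝ] Y)) = N) ∧
      (∀ Atil : X →L[ℝ] Y, ‖A - Atil‖ ≤ τ →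
        (N : Cardinal) ≤ Module.rank ℝ (LinearMap.range (Atil : X →ₗ[ℝ] Y))) :=
  numericalRank_eq_of_kolWidth_general A N τ hi hii
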